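/- Distinct BDDs have distinct arithmetisations: if u and v are BDDs over the same ordered variable set and ⟦u⟧ = ⟦v⟧ as polynomials, then u = v. -/
import Mathlib


open MvPolynomial

/-- Degree reduction `δ_x`: replaces every power `x^j` (`j ≥ 1`) in each monomial by `x`. -/
noncomputable def deltaRed {V F : Type*} [CommRing F] [DecidableEq V]
    (x : V) (p : MvPolynomial V F) : MvPolynomial V F :=
  p.support.sum fun m => monomial (Finsupp.update m x (min (m x) 1)) (coeff m p)

/-- Partial evaluation `[x := a] p`: substitute the constant `a` for variable `x`. -/
noncomputable def pevalVar {V F : Type*} [CommRing F] [DecidableEq V]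
    (x : V) (a : F) (p : MvPolynomial V F) : MvPolynomial V F :=
  aeval (fun y => if y = x then C a else X y) p

/-- A polynomial is multilinear if every variable has degree at most 1 in every monomial. -/
def Multilinear {V F : Type*} [CommSemiring F] (p : MvPolynomial V F) : Prop :=
  ∀ m ∈ p.support, ∀ x : V, m x ≤ 1

/-- Binary equivalence: `p` and `q` agree on all assignments with values in `{0,1}`. -/
def BinaryEquiv {V F : Type*} [CommSemiring F] (p q : MvPolynomial V F) : Prop :=
  ∀ σ : V → F, (∀ x, σ x = 0 ∨ σ x = 1) → eval σ p = eval σ q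

/-- A polynomial is binary if it takes values in `{0,1}` on all `{0,1}` assignments. -/
def BinaryPoly {V F : Type*} [CommSemiring F] (p : MvPolynomial V F) : Prop :=
  ∀ σ : V → F, (∀ x, σ x = 0 ∨ σ x = 1) → eval σ p = 0 ∨ eval σ p = 1

/-- Syntax of (not necessarily reduced) ordered binary decision diagrams over variables `Fin n`. -/
inductive BDD (n : ℕ) where
  | tru  : BDD n
  | fls  : BDD n
  | node (i : Fin n) (u v : BDD n) : BDD n
deriving DecidableEq

/-- Level of a BDD: `⟨true⟩, ⟨false⟩` have level 0; a node on variable `x_i` has level `i+1`. -/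
def BDD.level {n : ℕ} : BDD n → ℕ
  | tru => 0
  | fls => 0
  | node i _ _ => i.val + 1

/-- Well-formedness (reduced, ordered): children are distinct, of lower level and well-formed. -/
def BDD.wf {n : ℕ} : BDD n → Prop
  | tru => True
  | fls => True
  | node i u v => u ≠ v ∧ u.level ≤ i.val ∧ v.level ≤ i.val ∧ u.wf ∧ v.wf

/-- Arithmetisation of a BDD. -/
noncomputable def BDD.arith {n : ℕ} (F : Type*) [CommRing F] : BDD n → MvPolynomial (Fin n) F
  | tru => 1
  | fls => 0
  | node i u v => (1 - MvPolynomial.X i) * u.arith F + MvPolynomial.X i * v.arith F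


lemma pevalVar_arith_eq {n : ℕ} {F : Type*} [CommRing F]
    (i : Fin n) (a : F) : ∀ (w : BDD n), w.wf → w.level ≤ i.val →
    pevalVar i a (w.arith F) = w.arith F
  | BDD.tru, _, _ => by simp [pevalVar, BDD.arith]
  | BDD.fls, _, _ => by simp [pevalVar, BDD.arith]
  | BDD.node j u v, hwf, hl => by
      obtain ⟨-, hu, hv, hwu, hwv⟩ := hwf
      have hji : j ≠ i := by
        intro e; subst e; simp [BDD.level] at hl
      have hl' : j.val + 1 ≤ i.val := hl
      have h1 := pevalVar_arith_eq i a u hwu (by omega)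
      have h2 := pevalVar_arith_eq i a v hwv (by omega)
      simp only [pevalVar, BDD.arith, map_add, map_mul, map_sub, map_one, aeval_X,
        if_neg hji] at h1 h2 ⊢
      rw [h1, h2]

lemma pevalVar_arith_node {n : ℕ} {F : Type*} [CommRing F]
    (i : Fin n) (a : F) (u v : BDD n) (hu : u.wf) (hv : v.wf)
    (hlu : u.level ≤ i.val) (hlv : v.level ≤ i.val) :
    pevalVar i a ((BDD.node i u v).arith F)
      = (1 - C a) * u.arith F + C a * v.arith F := by
  have h1 := pevalVar_arith_eq i a u hu hlu
  have h2 := pevalVar_arith_eq i a v hv hlv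
  simp only [pevalVar, BDD.arith, map_add, map_mul, map_sub, map_one, aeval_X, if_pos rfl,
    if_true] at h1 h2 ⊢
  rw [h1, h2]

lemma bdd_aux {q : ℕ} [Fact q.Prime] {n : ℕ} :
    ∀ k, ∀ u v : BDD n, sizeOf u + sizeOf v < k → u.wf → v.wf →
    u.arith (ZMod q) = v.arith (ZMod q) → u = v := by
  intro k
  induction k with
  | zero => intro u v hk; omega
  | succ k ih =>
    intro u v hk hu hv h
    match u, v with
    | BDD.tru, BDD.tru => rfl
    | BDD.fls, BDD.fls => rfl
    | BDD.tru, BDD.fls => exact absurd h.symm (by simp [BDD.arith])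
    | BDD.fls, BDD.tru => exact absurd h (by simp [BDD.arith])
    | BDD.tru, BDD.node j u' v' =>
      obtain ⟨hne, hlu, hlv, hwu, hwv⟩ := hv
      have h0 := congrArg (pevalVar j (0 : ZMod q)) h
      have h1 := congrArg (pevalVar j (1 : ZMod q)) h
      rw [pevalVar_arith_node j _ u' v' hwu hwv hlu hlv] at h0 h1
      rw [pevalVar_arith_eq j _ BDD.tru trivial (by simp [BDD.level])] at h0 h1
      simp only [map_zero, map_one, sub_zero, sub_self, one_mul, zero_mul, mul_zero,
        add_zero, zero_add] at h0 h1
      exact absurd (ih u' v' (by simp at hk ⊢; omega) hwu hwv (h0.symm.trans h1)) hne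
    | BDD.fls, BDD.node j u' v' =>
      obtain ⟨hne, hlu, hlv, hwu, hwv⟩ := hv
      have h0 := congrArg (pevalVar j (0 : ZMod q)) h
      have h1 := congrArg (pevalVar j (1 : ZMod q)) h
      rw [pevalVar_arith_node j _ u' v' hwu hwv hlu hlv] at h0 h1
      rw [pevalVar_arith_eq j _ BDD.fls trivial (by simp [BDD.level])] at h0 h1
      simp only [map_zero, map_one, sub_zero, sub_self, one_mul, zero_mul, mul_zero,
        add_zero, zero_add] at h0 h1
      exact absurd (ih u' v' (by simp at hk ⊢; omega) hwu hwv (h0.symm.trans h1)) hne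
    | BDD.node j u' v', BDD.tru =>
      obtain ⟨hne, hlu, hlv, hwu, hwv⟩ := hu
      have h0 := congrArg (pevalVar j (0 : ZMod q)) h
      have h1 := congrArg (pevalVar j (1 : ZMod q)) h
      rw [pevalVar_arith_node j _ u' v' hwu hwv hlu hlv] at h0 h1
      rw [pevalVar_arith_eq j _ BDD.tru trivial (by simp [BDD.level])] at h0 h1
      simp only [map_zero, map_one, sub_zero, sub_self, one_mul, zero_mul, mul_zero,
        add_zero, zero_add] at h0 h1
      exact absurd (ih u' v' (by simp at hk ⊢; omega) hwu hwv (h0.trans h1.symm)) hne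
    | BDD.node j u' v', BDD.fls =>
      obtain ⟨hne, hlu, hlv, hwu, hwv⟩ := hu
      have h0 := congrArg (pevalVar j (0 : ZMod q)) h
      have h1 := congrArg (pevalVar j (1 : ZMod q)) h
      rw [pevalVar_arith_node j _ u' v' hwu hwv hlu hlv] at h0 h1
      rw [pevalVar_arith_eq j _ BDD.fls trivial (by simp [BDD.level])] at h0 h1
      simp only [map_zero, map_one, sub_zero, sub_self, one_mul, zero_mul, mul_zero,
        add_zero, zero_add] at h0 h1
      exact absurd (ih u' v' (by simp at hk ⊢; omega) hwu hwv (h0.trans h1.symm)) hne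
    | BDD.node i a b, BDD.node j c d =>
      obtain ⟨hne1, hla, hlb, hwa, hwb⟩ := hu
      obtain ⟨hne2, hlc, hld, hwc, hwd⟩ := hv
      rcases lt_trichotomy i.val j.val with hij | hij | hij
      · -- X j doesn't occur on the left
        have h0 := congrArg (pevalVar j (0 : ZMod q)) h
        have h1 := congrArg (pevalVar j (1 : ZMod q)) h
        rw [pevalVar_arith_node j _ c d hwc hwd hlc hld] at h0 h1
        rw [pevalVar_arith_eq j _ (BDD.node i a b) ⟨hne1, hla, hlb, hwa, hwb⟩
          (by simp [BDD.level]; omega)] at h0 h1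
        simp only [map_zero, map_one, sub_zero, sub_self, one_mul, zero_mul, mul_zero,
          add_zero, zero_add] at h0 h1
        exact absurd (ih c d (by simp at hk ⊢; omega) hwc hwd (h0.symm.trans h1)) hne2
      · have hij' : i = j := Fin.ext hij
        subst hij'
        have h0 := congrArg (pevalVar i (0 : ZMod q)) h
        have h1 := congrArg (pevalVar i (1 : ZMod q)) h
        rw [pevalVar_arith_node i _ a b hwa hwb hla hlb,
          pevalVar_arith_node i _ c d hwc hwd hlc hld] at h0 h1
        simp only [map_zero, map_one, sub_zero, sub_self, one_mul, zero_mul, mul_zero,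
          add_zero, zero_add] at h0 h1
        rw [ih a c (by simp at hk ⊢; omega) hwa hwc h0,
          ih b d (by simp at hk ⊢; omega) hwb hwd h1]
      · have h0 := congrArg (pevalVar i (0 : ZMod q)) h
        have h1 := congrArg (pevalVar i (1 : ZMod q)) h
        rw [pevalVar_arith_node i _ a b hwa hwb hla hlb] at h0 h1
        rw [pevalVar_arith_eq i _ (BDD.node j c d) ⟨hne2, hlc, hld, hwc, hwd⟩
          (by simp [BDD.level]; omega)] at h0 h1
        simp only [map_zero, map_one, sub_zero, sub_self, one_mul, zero_mul, mul_zero,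
          add_zero, zero_add] at h0 h1
        exact absurd (ih a b (by simp at hk ⊢; omega) hwa hwb (h0.trans h1.symm)) hne1

/-- distinct (reduced ordered) BDDs have distinct arithmetisations. -/
theorem bdd_arith_injective {q : ℕ} [Fact q.Prime] {n : ℕ}
    (u v : BDD n) (hu : u.wf) (hv : v.wf)
    (h : u.arith (ZMod q) = v.arith (ZMod q)) : u = v :=
  bdd_aux (sizeOf u + sizeOf v + 1) u v (by omega) hu hv h
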